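/- The map ψ_r : ℝ² → ℝ² defined by ψ_r = T on the closed ball of radius r around 0 (where T = diag(λ₁, λ₂), λ₁ ≥ λ₂ > 0, λ₁λ₂ = 1) and ψ_r(z) = c·z + r²·d·z⁻¹ (complex notation, c = (λ₁+λ₂)/2, d = (λ₁−λ₂)/2) outside this ball, is a bi-Lipschitz homeomorphism of ℝ². -/

import Mathlib

open Matrix MeasureTheory Real

noncomputable section

/-- The Euclidean plane. -/
abbrev E2 := EuclideanSpace ℝ (Fin 2)

/-- `SL(2,ℝ)` as matrices of determinant one. -/
abbrev SL2 := Matrix.SpecialLinearGroup (Fin 2) ℝ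

/-- The seminorm `v ↦ s (M v)`, i.e. `s ∘ M`. -/
def compM (s : Seminorm ℝ E2) (M : Matrix (Fin 2) (Fin 2) ℝ) : Seminorm ℝ E2 :=
  s.comp (Matrix.toEuclideanLin M)

/-- A seminorm is a norm iff it is positive away from the origin. -/
def IsNorm (s : Seminorm ℝ E2) : Prop := ∀ v : E2, v ≠ 0 → 0 < s v

/-- Monotonicity of a functional on seminorms. -/
def Monot (J : Seminorm ℝ E2 → ℝ) : Prop := ∀ s s' : Seminorm ℝ E2, s' ≤ s → J s' ≤ J s

/-- Degree 2 homogeneity of a functional on seminorms. -/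
def Homog (J : Seminorm ℝ E2 → ℝ) : Prop :=
  ∀ (c : NNReal) (s : Seminorm ℝ E2), J (c • s) = (c : ℝ) ^ 2 * J s

/-- `SL₂`-invariance of a functional on seminorms. -/
def SL2inv (J : Seminorm ℝ E2 → ℝ) : Prop :=
  ∀ (s : Seminorm ℝ E2) (T : SL2), J (compM s (T : Matrix (Fin 2) (Fin 2) ℝ)) = J s

/-- The Reshetnyak energy `I²₊(s) = max_{v ∈ S¹} s(v)²`. -/
def Iplus (s : Seminorm ℝ E2) : ℝ := ⨆ v : Metric.sphere (0 : E2) 1, (s (v : E2)) ^ 2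

/-- The unit ball of a seminorm. -/
def unitBallS (s : Seminorm ℝ E2) : Set E2 := {v | s v ≤ 1}

/-- The ellipse `M(D̄)` is inscribed in the unit ball of `s`. -/
def ellipseIn (s : Seminorm ℝ E2) (M : Matrix (Fin 2) (Fin 2) ℝ) : Prop :=
  (Matrix.toEuclideanLin M) '' (Metric.closedBall 0 1) ⊆ unitBallS s

/-- The area of the largest ellipse inscribed in the unit ball of `s`
(the area of the Loewner ellipse); the ellipse `M(D̄)` has area `π |det M|`. -/
def LoewnerArea (s : Seminorm ℝ E2) : ℝ :=
  sSup {a : ℝ | ∃ M : Matrix (Fin 2) (Fin 2) ℝ, ellipseIn s M ∧ a = π * |M.det|}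

/-- The inscribed Riemannian (Ivanov) Jacobian `J^i(s) = π / |L|`. -/
def Ji (s : Seminorm ℝ E2) : ℝ := π / LoewnerArea s

/-- `s` is isotropic: some round disc `t·D̄` is inscribed in the unit ball of `s` and has at
least the area of every inscribed ellipse, i.e. the Loewner ellipse is a round disc. -/
def Isotropic (s : Seminorm ℝ E2) : Prop :=
  ∃ t : ℝ, 0 < t ∧ Metric.closedBall (0 : E2) t ⊆ unitBallS s ∧
    ∀ M : Matrix (Fin 2) (Fin 2) ℝ, ellipseIn s M → π * |M.det| ≤ π * t ^ 2

/-- A Jacobian (definition of area): monotone, degree-2 homogeneous, `SL₂`-invariant,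
normalized on the Euclidean norm. -/
def IsJacobian (J : Seminorm ℝ E2 → ℝ) : Prop :=
  (∀ s, 0 ≤ J s) ∧ Monot J ∧ Homog J ∧ SL2inv J ∧ J (normSeminorm ℝ E2) = 1

/-- The map `ψ_r`: the linear map `diag(λ₁, λ₂)` on the closed `r`-ball, and
`z ↦ c z + r² d z⁻¹` outside it. -/
def psir (l1 l2 r : ℝ) (z : ℂ) : ℂ :=
  if ‖z‖ ≤ r then ((l1 * z.re : ℝ) : ℂ) + ((l2 * z.im : ℝ) : ℂ) * Complex.I
  else (((l1 + l2) / 2 : ℝ) : ℂ) * z + (r : ℂ) ^ 2 * (((l1 - l2) / 2 : ℝ) : ℂ) * z⁻¹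

/-! On each piece `ψ_r` is bi-Lipschitz with constants between `λ₂` and `λ₁`: `T` has singular
values `λ₁, λ₂`, and for `|z|, |w| ≥ r` one has `f z - f w = (z - w) (c - r² d / (z w))` with
`|r² d / (z w)| ≤ d` and `c ± d = λ₁, λ₂`. For points in different pieces the segment joining them
crosses the circle `|z| = r`, where the pieces agree, so the upper bounds add up. For the lower
bound one crosses in the target instead: with `q w = (λ₂ Re w)² + (λ₁ Im w)²`, `T` maps the disc
onto `{q ≤ r²}`, and the identity `q (f z) - r² = (|z|² - r²) (c² |z|² - d² r²) q z / |z|⁴` shows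
that `f` maps the exterior into `{q ≥ r²}`; a segment from one region to the other meets the
ellipse `{q = r²}`, the image of the circle. For surjectivity outside the ellipse, the roots of
`c z² - w z + r² d = 0` have product `r² d / c`, so the larger one has `c |z|² ≥ r² d`, and then the
same identity forces `|z| ≥ r`. -/

open Set

section Gluing

variable {E : Type*} [NormedAddCommGroup E] [NormedSpace ℝ E]

theorem exists_mem_segment_inter_of_isClosed {A B : Set E} (hA : IsClosed A) (hB : IsClosed B)
    (hAB : A ∪ B = univ) {a b : E} (ha : a ∈ A) (hb : b ∈ B) :
    ∃ p ∈ segment ℝ a b, p ∈ A ∧ p ∈ B := by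
  obtain ⟨p, hp, hpA, hpB⟩ := isPreconnected_closed_iff.1 (convex_segment a b).isPreconnected
    A B hA hB (by simp [hAB]) ⟨a, left_mem_segment ℝ a b, ha⟩ ⟨b, right_mem_segment ℝ a b, hb⟩
  exact ⟨p, hp, hpA, hpB⟩

theorem LipschitzWith.of_lipschitzOnWith_of_isClosed {F : Type*} [PseudoMetricSpace F]
    {f : E → F} {K : NNReal} {s t : Set E} (hs : IsClosed s) (ht : IsClosed t)
    (hst : s ∪ t = univ) (hfs : LipschitzOnWith K f s) (hft : LipschitzOnWith K f t) :
    LipschitzWith K f := by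
  have mixed : ∀ a ∈ s, ∀ b ∈ t, dist (f a) (f b) ≤ K * dist a b := by
    intro a ha b hb
    obtain ⟨p, hp, hps, hpt⟩ := exists_mem_segment_inter_of_isClosed hs ht hst ha hb
    calc dist (f a) (f b) ≤ dist (f a) (f p) + dist (f p) (f b) := dist_triangle _ _ _
      _ ≤ K * dist a p + K * dist p b :=
        add_le_add (hfs.dist_le_mul a ha p hps) (hft.dist_le_mul p hpt b hb)
      _ = K * dist a b := by rw [← mul_add, dist_add_dist_of_mem_segment hp]
  refine LipschitzWith.of_dist_le_mul fun a b => ?_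
  have ha : a ∈ s ∪ t := hst ▸ mem_univ a
  have hb : b ∈ s ∪ t := hst ▸ mem_univ b
  rcases ha with ha | ha <;> rcases hb with hb | hb
  · exact hfs.dist_le_mul a ha b hb
  · exact mixed a ha b hb
  · rw [dist_comm, dist_comm a]; exact mixed b hb a ha
  · exact hft.dist_le_mul a ha b hb

theorem AntilipschitzWith.of_le_mul_dist_of_isClosed {X : Type*} [PseudoMetricSpace X]
    {f : X → E} {K : NNReal} {s t : Set X} (hst : s ∪ t = univ) {A B : Set E}
    (hA : IsClosed A) (hB : IsClosed B) (hAB : A ∪ B = univ) (hsA : MapsTo f s A)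
    (htB : MapsTo f t B) (hboundary : A ∩ B ⊆ f '' (s ∩ t))
    (hfs : ∀ x ∈ s, ∀ y ∈ s, dist x y ≤ K * dist (f x) (f y))
    (hft : ∀ x ∈ t, ∀ y ∈ t, dist x y ≤ K * dist (f x) (f y)) :
    AntilipschitzWith K f := by
  have mixed : ∀ a ∈ s, ∀ b ∈ t, dist a b ≤ K * dist (f a) (f b) := by
    intro a ha b hb
    obtain ⟨q, hq, hqA, hqB⟩ := exists_mem_segment_inter_of_isClosed hA hB hAB (hsA ha) (htB hb)
    obtain ⟨p, ⟨hps, hpt⟩, rfl⟩ := hboundary ⟨hqA, hqB⟩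
    calc dist a b ≤ dist a p + dist p b := dist_triangle _ _ _
      _ ≤ K * dist (f a) (f p) + K * dist (f p) (f b) :=
        add_le_add (hfs a ha p hps) (hft p hpt b hb)
      _ = K * dist (f a) (f b) := by rw [← mul_add, dist_add_dist_of_mem_segment hq]
  refine AntilipschitzWith.of_le_mul_dist fun a b => ?_
  have ha : a ∈ s ∪ t := hst ▸ mem_univ a
  have hb : b ∈ s ∪ t := hst ▸ mem_univ b
  rcases ha with ha | ha <;> rcases hb with hb | hb
  · exact hfs a ha b hb
  · exact mixed a ha b hb
  · rw [dist_comm, dist_comm (f a)]; exact mixed b hb a ha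
  · exact hft a ha b hb

end Gluing

section PlaneMaps

open Complex

def diagMap (a b : ℝ) (z : ℂ) : ℂ := ((a * z.re : ℝ) : ℂ) + ((b * z.im : ℝ) : ℂ) * I

def joukowskiMap (c d r : ℝ) (z : ℂ) : ℂ := (c : ℂ) * z + (r : ℂ) ^ 2 * (d : ℂ) * z⁻¹

def ellipseNormSq (a b : ℝ) (w : ℂ) : ℝ := (b * w.re) ^ 2 + (a * w.im) ^ 2

variable {a b c d r : ℝ}

@[simp] theorem diagMap_re (a b : ℝ) (z : ℂ) : (diagMap a b z).re = a * z.re := by simp [diagMap]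

@[simp] theorem diagMap_im (a b : ℝ) (z : ℂ) : (diagMap a b z).im = b * z.im := by simp [diagMap]

theorem diagMap_sub (a b : ℝ) (z w : ℂ) : diagMap a b z - diagMap a b w = diagMap a b (z - w) := by
  apply Complex.ext <;> simp <;> ring

theorem diagMap_diagMap (a b a' b' : ℝ) (z : ℂ) :
    diagMap a' b' (diagMap a b z) = diagMap (a' * a) (b' * b) z := by
  apply Complex.ext <;> simp <;> ring

theorem diagMap_one_one (z : ℂ) : diagMap 1 1 z = z := by
  apply Complex.ext <;> simp

theorem norm_diagMap_le {K : ℝ} (ha : |a| ≤ K) (hb : |b| ≤ K) (z : ℂ) :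
    ‖diagMap a b z‖ ≤ K * ‖z‖ := by
  have hK : 0 ≤ K := (abs_nonneg a).trans ha
  have ha2 : a ^ 2 ≤ K ^ 2 := sq_le_sq' (abs_le.1 ha).1 (abs_le.1 ha).2
  have hb2 : b ^ 2 ≤ K ^ 2 := sq_le_sq' (abs_le.1 hb).1 (abs_le.1 hb).2
  rw [← sq_le_sq₀ (norm_nonneg _) (by positivity), mul_pow, Complex.sq_norm, Complex.sq_norm,
    normSq_apply, normSq_apply, diagMap_re, diagMap_im]
  nlinarith [mul_le_mul_of_nonneg_right ha2 (mul_self_nonneg z.re),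
    mul_le_mul_of_nonneg_right hb2 (mul_self_nonneg z.im)]

theorem continuous_ellipseNormSq (a b : ℝ) : Continuous (ellipseNormSq a b) := by
  unfold ellipseNormSq; fun_prop

theorem ellipseNormSq_eq_normSq_diagMap (a b : ℝ) (w : ℂ) :
    ellipseNormSq a b w = normSq (diagMap b a w) := by
  simp only [ellipseNormSq, normSq_apply, diagMap_re, diagMap_im]; ring

theorem ellipseNormSq_diagMap (a b : ℝ) (z : ℂ) :
    ellipseNormSq a b (diagMap a b z) = (a * b) ^ 2 * normSq z := by
  simp only [ellipseNormSq, diagMap_re, diagMap_im, normSq_apply]; ring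

theorem joukowskiMap_re (z : ℂ) :
    (joukowskiMap c d r z).re = c * z.re + r ^ 2 * d * z.re / normSq z := by
  simp [joukowskiMap, ← ofReal_pow]; ring

theorem joukowskiMap_im (z : ℂ) :
    (joukowskiMap c d r z).im = c * z.im - r ^ 2 * d * z.im / normSq z := by
  simp [joukowskiMap, ← ofReal_pow]; ring

theorem joukowskiMap_eq_diagMap {z : ℂ} (hz : ‖z‖ = r) :
    joukowskiMap ((a + b) / 2) ((a - b) / 2) r z = diagMap a b z := by
  rcases eq_or_ne z 0 with rfl | hz0
  · simp [joukowskiMap, diagMap]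
  have hn : normSq z = r ^ 2 := by rw [← hz, Complex.sq_norm]
  have hn0 : normSq z ≠ 0 := normSq_pos.2 hz0 |>.ne'
  apply Complex.ext
  · rw [joukowskiMap_re, diagMap_re, ← hn]; field_simp; ring
  · rw [joukowskiMap_im, diagMap_im, ← hn]; field_simp; ring

theorem joukowskiMap_sub {z w : ℂ} (hz : z ≠ 0) (hw : w ≠ 0) :
    joukowskiMap c d r z - joukowskiMap c d r w = (z - w) * (c - r ^ 2 * d / (z * w)) := by
  unfold joukowskiMap; field_simp; ring

theorem norm_sq_mul_div_mul_le_abs (hr : 0 ≤ r) {z w : ℂ} (hz : r ≤ ‖z‖) (hw : r ≤ ‖w‖) :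
    ‖(r : ℂ) ^ 2 * d / (z * w)‖ ≤ |d| := by
  rw [norm_div, norm_mul, norm_mul, norm_pow, norm_real, norm_real, Real.norm_eq_abs,
    Real.norm_eq_abs, abs_of_nonneg hr]
  refine div_le_of_le_mul₀ (by positivity) (abs_nonneg d) ?_
  rw [sq, mul_comm |d|]
  exact mul_le_mul_of_nonneg_right (mul_le_mul hz hw hr (norm_nonneg z)) (abs_nonneg d)

theorem norm_joukowskiMap_sub_le (hr : 0 < r) {z w : ℂ} (hz : r ≤ ‖z‖) (hw : r ≤ ‖w‖) :
    ‖joukowskiMap c d r z - joukowskiMap c d r w‖ ≤ (|c| + |d|) * ‖z - w‖ := by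
  rw [joukowskiMap_sub (norm_pos_iff.1 (hr.trans_le hz)) (norm_pos_iff.1 (hr.trans_le hw)),
    norm_mul, mul_comm]
  gcongr
  calc ‖(c : ℂ) - r ^ 2 * d / (z * w)‖ ≤ ‖(c : ℂ)‖ + ‖(r : ℂ) ^ 2 * d / (z * w)‖ := norm_sub_le _ _
    _ ≤ |c| + |d| := by
      rw [norm_real, Real.norm_eq_abs]
      gcongr
      exact norm_sq_mul_div_mul_le_abs hr.le hz hw

theorem le_norm_joukowskiMap_sub (hr : 0 < r) {z w : ℂ} (hz : r ≤ ‖z‖) (hw : r ≤ ‖w‖) :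
    (|c| - |d|) * ‖z - w‖ ≤ ‖joukowskiMap c d r z - joukowskiMap c d r w‖ := by
  rw [joukowskiMap_sub (norm_pos_iff.1 (hr.trans_le hz)) (norm_pos_iff.1 (hr.trans_le hw)),
    norm_mul, mul_comm]
  gcongr
  calc |c| - |d| ≤ ‖(c : ℂ)‖ - ‖(r : ℂ) ^ 2 * d / (z * w)‖ := by
        rw [norm_real, Real.norm_eq_abs]
        gcongr
        exact norm_sq_mul_div_mul_le_abs hr.le hz hw
    _ ≤ ‖(c : ℂ) - r ^ 2 * d / (z * w)‖ := norm_sub_norm_le _ _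

theorem ellipseNormSq_joukowskiMap {z : ℂ} (hz : z ≠ 0) :
    ellipseNormSq a b (joukowskiMap ((a + b) / 2) ((a - b) / 2) r z) =
      (a * b) ^ 2 * r ^ 2 + (normSq z - r ^ 2) *
        (((a + b) / 2) ^ 2 * normSq z - ((a - b) / 2) ^ 2 * r ^ 2) * ellipseNormSq a b z /
          normSq z ^ 2 := by
  have hn0 : normSq z ≠ 0 := normSq_pos.2 hz |>.ne'
  have hn : normSq z = z.re ^ 2 + z.im ^ 2 := by rw [normSq_apply]; ring
  rw [ellipseNormSq, ellipseNormSq, joukowskiMap_re, joukowskiMap_im]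
  field_simp
  rw [hn]
  ring

theorem le_ellipseNormSq_joukowskiMap (hab : 0 ≤ a * b) (hr : 0 < r) {z : ℂ} (hz : r ≤ ‖z‖) :
    (a * b) ^ 2 * r ^ 2 ≤ ellipseNormSq a b (joukowskiMap ((a + b) / 2) ((a - b) / 2) r z) := by
  have hn : r ^ 2 ≤ normSq z := by rw [← Complex.sq_norm]; gcongr
  rw [ellipseNormSq_joukowskiMap (norm_pos_iff.1 (hr.trans_le hz))]
  refine le_add_of_nonneg_right (div_nonneg (mul_nonneg (mul_nonneg ?_ ?_) ?_) (sq_nonneg _))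
  · linarith
  · nlinarith [sq_nonneg r]
  · unfold ellipseNormSq; positivity

theorem ellipseNormSq_joukowskiMap_le {z : ℂ} (hz : z ≠ 0) (hn : normSq z ≤ r ^ 2)
    (hcd : ((a - b) / 2) ^ 2 * r ^ 2 ≤ ((a + b) / 2) ^ 2 * normSq z) :
    ellipseNormSq a b (joukowskiMap ((a + b) / 2) ((a - b) / 2) r z) ≤ (a * b) ^ 2 * r ^ 2 := by
  rw [ellipseNormSq_joukowskiMap hz]
  refine add_le_of_nonpos_right (div_nonpos_of_nonpos_of_nonneg
    (mul_nonpos_of_nonpos_of_nonneg (mul_nonpos_of_nonpos_of_nonneg ?_ ?_) ?_) (sq_nonneg _))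
  · linarith
  · linarith
  · unfold ellipseNormSq; positivity

theorem exists_quadratic_root_norm_sq_ge {p q s : ℂ} (hp : p ≠ 0) (hq : q ≠ 0) :
    ∃ z : ℂ, z ≠ 0 ∧ p * z ^ 2 - q * z + s = 0 ∧ ‖s‖ ≤ ‖p‖ * ‖z‖ ^ 2 := by
  have larger_root : ∀ u v : ℂ, u + v = q / p → s = p * u * v → ‖v‖ ≤ ‖u‖ →
      u ≠ 0 ∧ p * u ^ 2 - q * u + s = 0 ∧ ‖s‖ ≤ ‖p‖ * ‖u‖ ^ 2 := by
    intro u v hsum hprod hvu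
    have hq' : q = p * (u + v) := by rw [hsum]; field_simp
    refine ⟨fun hu => ?_, by rw [hprod, hq']; ring, ?_⟩
    · rw [hu, norm_zero, norm_le_zero_iff] at hvu
      exact hq (by rw [hq', hu, hvu, add_zero, mul_zero])
    · rw [hprod, norm_mul, norm_mul, sq, ← mul_assoc]
      gcongr
  obtain ⟨z₀, h₀⟩ := exists_quadratic_eq_zero hp (IsAlgClosed.exists_eq_mul_self _)
      (b := -q) (c := s)
  have hsum : z₀ + (q / p - z₀) = q / p := by ring
  have hprod : s = p * z₀ * (q / p - z₀) := by field_simp; linear_combination h₀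
  rcases le_total ‖q / p - z₀‖ ‖z₀‖ with h | h
  · exact ⟨z₀, larger_root _ _ hsum hprod h⟩
  · exact ⟨_, larger_root _ _ (by rw [add_comm, hsum]) (by rw [hprod]; ring) h⟩

theorem exists_joukowskiMap_eq (hc : c ≠ 0) {w : ℂ} (hw : w ≠ 0) :
    ∃ z : ℂ, z ≠ 0 ∧ joukowskiMap c d r z = w ∧ r ^ 2 * |d| ≤ |c| * normSq z := by
  obtain ⟨z, hz, hroot, hnorm⟩ :=
    exists_quadratic_root_norm_sq_ge (s := (r : ℂ) ^ 2 * d) (ofReal_ne_zero.2 hc) hw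
  refine ⟨z, hz, ?_, ?_⟩
  · unfold joukowskiMap
    field_simp
    linear_combination hroot
  · simpa [Complex.sq_norm] using hnorm

end PlaneMaps

section Psir

open Complex

variable {l1 l2 r : ℝ} {z : ℂ}

theorem psir_of_norm_le (h : ‖z‖ ≤ r) : psir l1 l2 r z = diagMap l1 l2 z := if_pos h

theorem psir_of_le_norm (h : r ≤ ‖z‖) :
    psir l1 l2 r z = joukowskiMap ((l1 + l2) / 2) ((l1 - l2) / 2) r z := by
  rcases h.eq_or_lt with h | h
  · rw [psir_of_norm_le h.ge, joukowskiMap_eq_diagMap h.symm]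
  · exact if_neg h.not_ge

theorem psir_diagMap_of_ellipseNormSq_le (hdet : l1 * l2 = 1) (hr : 0 ≤ r) {w : ℂ}
    (hw : ellipseNormSq l1 l2 w ≤ r ^ 2) :
    ‖diagMap l2 l1 w‖ ≤ r ∧ psir l1 l2 r (diagMap l2 l1 w) = w := by
  have hnorm : ‖diagMap l2 l1 w‖ ≤ r := by
    rwa [← sq_le_sq₀ (norm_nonneg _) hr, Complex.sq_norm, ← ellipseNormSq_eq_normSq_diagMap]
  refine ⟨hnorm, ?_⟩
  rw [psir_of_norm_le hnorm, diagMap_diagMap, hdet, mul_comm, hdet, diagMap_one_one]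

theorem lipschitzWith_psir (h12 : l2 ≤ l1) (h2 : 0 ≤ l2) (hr : 0 < r) :
    LipschitzWith l1.toNNReal (psir l1 l2 r) := by
  have hl1 : (l1.toNNReal : ℝ) = l1 := Real.coe_toNNReal _ (h2.trans h12)
  refine LipschitzWith.of_lipschitzOnWith_of_isClosed (s := Metric.closedBall 0 r)
    (t := {z | r ≤ ‖z‖}) Metric.isClosed_closedBall (isClosed_le continuous_const continuous_norm)
    (by ext z; simp [le_total]) ?_ ?_
  · refine LipschitzOnWith.of_dist_le_mul fun z hz w hw => ?_
    rw [mem_closedBall_zero_iff] at hz hw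
    rw [psir_of_norm_le hz, psir_of_norm_le hw, dist_eq_norm, dist_eq_norm, diagMap_sub, hl1]
    exact norm_diagMap_le (abs_of_nonneg (h2.trans h12)).le (abs_le.2 ⟨by linarith, h12⟩) _
  · refine LipschitzOnWith.of_dist_le_mul fun z hz w hw => ?_
    rw [psir_of_le_norm hz, psir_of_le_norm hw, dist_eq_norm, dist_eq_norm, hl1]
    convert norm_joukowskiMap_sub_le hr hz hw using 2
    rw [abs_of_nonneg (by linarith), abs_of_nonneg (by linarith)]
    ring

theorem antilipschitzWith_psir (h12 : l2 ≤ l1) (h2 : 0 < l2) (hdet : l1 * l2 = 1) (hr : 0 < r) :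
    AntilipschitzWith l1.toNNReal (psir l1 l2 r) := by
  have hl1 : (l1.toNNReal : ℝ) = l1 := Real.coe_toNNReal _ (h2.le.trans h12)
  refine AntilipschitzWith.of_le_mul_dist_of_isClosed (s := Metric.closedBall 0 r)
    (t := {z | r ≤ ‖z‖}) (A := {w | ellipseNormSq l1 l2 w ≤ r ^ 2})
    (B := {w | r ^ 2 ≤ ellipseNormSq l1 l2 w}) (by ext z; simp [le_total])
    (isClosed_le (continuous_ellipseNormSq l1 l2) continuous_const)
    (isClosed_le continuous_const (continuous_ellipseNormSq l1 l2)) (by ext w; simp [le_total])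
    ?_ ?_ ?_ ?_ ?_
  · intro z hz
    rw [mem_closedBall_zero_iff] at hz
    rw [mem_ofPred_eq, psir_of_norm_le hz, ellipseNormSq_diagMap, hdet, one_pow, one_mul,
      ← Complex.sq_norm]
    gcongr
  · intro z hz
    have := le_ellipseNormSq_joukowskiMap (hdet ▸ zero_le_one) hr hz
    rwa [hdet, one_pow, one_mul, ← psir_of_le_norm hz] at this
  · intro w ⟨hwA, hwB⟩
    obtain ⟨hnorm, hpsi⟩ := psir_diagMap_of_ellipseNormSq_le hdet hr.le hwA
    refine ⟨diagMap l2 l1 w, ⟨mem_closedBall_zero_iff.2 hnorm, ?_⟩, hpsi⟩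
    rwa [mem_ofPred_eq, ← sq_le_sq₀ hr.le (norm_nonneg _), Complex.sq_norm,
      ← ellipseNormSq_eq_normSq_diagMap]
  · intro z hz w hw
    rw [mem_closedBall_zero_iff] at hz hw
    rw [psir_of_norm_le hz, psir_of_norm_le hw, dist_eq_norm, dist_eq_norm, diagMap_sub, hl1]
    calc ‖z - w‖ = ‖diagMap l2 l1 (diagMap l1 l2 (z - w))‖ := by
          rw [diagMap_diagMap, hdet, mul_comm, hdet, diagMap_one_one]
      _ ≤ l1 * ‖diagMap l1 l2 (z - w)‖ :=
          norm_diagMap_le (abs_le.2 ⟨by linarith, h12⟩) (abs_of_nonneg (h2.le.trans h12)).le _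
  · intro z hz w hw
    rw [psir_of_le_norm hz, psir_of_le_norm hw, dist_eq_norm, dist_eq_norm, hl1]
    have := le_norm_joukowskiMap_sub (c := (l1 + l2) / 2) (d := (l1 - l2) / 2) hr hz hw
    rw [abs_of_nonneg (by linarith), abs_of_nonneg (by linarith),
      show (l1 + l2) / 2 - (l1 - l2) / 2 = l2 by ring] at this
    calc ‖z - w‖ = l1 * (l2 * ‖z - w‖) := by rw [← mul_assoc, hdet, one_mul]
      _ ≤ _ := mul_le_mul_of_nonneg_left this (h2.le.trans h12)

theorem surjective_psir (h12 : l2 ≤ l1) (h2 : 0 < l2) (hdet : l1 * l2 = 1) (hr : 0 < r) :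
    Function.Surjective (psir l1 l2 r) := by
  intro w
  by_cases hw : ellipseNormSq l1 l2 w ≤ r ^ 2
  · exact ⟨_, (psir_diagMap_of_ellipseNormSq_le hdet hr.le hw).2⟩
  have hw0 : w ≠ 0 := by
    rintro rfl
    exact hw (by simp [ellipseNormSq]; positivity)
  obtain ⟨z, hz0, hzw, hzn⟩ :=
    exists_joukowskiMap_eq (d := (l1 - l2) / 2) (r := r) (by linarith : (l1 + l2) / 2 ≠ 0) hw0
  by_cases hz : r ≤ ‖z‖
  · exact ⟨z, by rw [psir_of_le_norm hz, hzw]⟩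
  rw [abs_of_nonneg (by linarith), abs_of_nonneg (by linarith)] at hzn
  have hn : normSq z ≤ r ^ 2 := by rw [← Complex.sq_norm]; gcongr; exact (not_le.1 hz).le
  have hcd : ((l1 - l2) / 2) ^ 2 * r ^ 2 ≤ ((l1 + l2) / 2) ^ 2 * normSq z := by
    calc ((l1 - l2) / 2) ^ 2 * r ^ 2 = (l1 - l2) / 2 * (r ^ 2 * ((l1 - l2) / 2)) := by ring
      _ ≤ (l1 + l2) / 2 * ((l1 + l2) / 2 * normSq z) := by
        gcongr
        · linarith
        · linarith
      _ = ((l1 + l2) / 2) ^ 2 * normSq z := by ring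
  have := ellipseNormSq_joukowskiMap_le hz0 hn hcd
  rw [hzw, hdet, one_pow, one_mul] at this
  exact absurd this hw

end Psir

/-- `ψ_r` is a bi-Lipschitz homeomorphism of the plane. -/
theorem stmt17 (l1 l2 r : ℝ) (h12 : l2 ≤ l1) (h2 : 0 < l2) (hdet : l1 * l2 = 1) (hr : 0 < r) :
    ∃ K : NNReal, 0 < K ∧ LipschitzWith K (psir l1 l2 r) ∧
      Function.Bijective (psir l1 l2 r) ∧ AntilipschitzWith K (psir l1 l2 r) := by
  have hanti := antilipschitzWith_psir h12 h2 hdet hr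
  exact ⟨l1.toNNReal, Real.toNNReal_pos.2 (h2.trans_le h12), lipschitzWith_psir h12 h2.le hr,
    ⟨hanti.injective, surjective_psir h12 h2 hdet hr⟩, hanti⟩
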